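/- arXiv:gr-qc/0302021 — 5 statements merged into one kernel-verified Lean document; each statement's English description precedes it below -/
import Mathlib

section
/- Let Λ > 0 and α satisfy 0 < α ≤ 1/4 and 2α²/Λ < 1, and let k satisfy 0 ≤ k ≤ 1. Then the strict discriminant inequality 2α²Λ⁻¹(1 − k)² − 4(2α − k/2)(1 − 2α − k/2) < 0 holds if and only if k < 1 − (1 − 4α)/√(1 − 2Λ⁻¹α²). -/
/-!
With `u = 1 - k` the product `4(2α - k/2)(1 - 2α - k/2)` factors as `(u - (1 - 4α))(u + (1 - 4α))`,
so the discriminant is `(1 - 4α)² - (1 - 2Λ⁻¹α²) u²`. Both `1 - 4α` and `u` are nonnegative,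
so its sign is decided by comparing `1 - 4α` with `√(1 - 2Λ⁻¹α²) · u`.
-/

lemma discriminant_eq (c α k : ℝ) :
    2 * α ^ 2 * c * (1 - k) ^ 2 - 4 * (2 * α - k / 2) * (1 - 2 * α - k / 2) =
      (1 - 4 * α) ^ 2 - (1 - 2 * c * α ^ 2) * (1 - k) ^ 2 := by
  ring

lemma sq_sub_mul_sq_neg_iff_div_sqrt_lt {a q u : ℝ} (ha : 0 ≤ a) (hq : 0 < q) (hu : 0 ≤ u) :
    a ^ 2 - q * u ^ 2 < 0 ↔ a / Real.sqrt q < u := by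
  have hsqrt : 0 < Real.sqrt q := Real.sqrt_pos.mpr hq
  calc a ^ 2 - q * u ^ 2 < 0 ↔ a ^ 2 < (Real.sqrt q * u) ^ 2 := by
        rw [mul_pow, Real.sq_sqrt hq.le, sub_neg]
    _ ↔ a < Real.sqrt q * u := pow_lt_pow_iff_left₀ ha (by positivity) two_ne_zero
    _ ↔ a / Real.sqrt q < u := by rw [div_lt_iff₀' hsqrt]

theorem discriminant_lt_iff_general (Λ α k : ℝ) (hα1 : α ≤ 1 / 4) (hαΛ : 2 * α ^ 2 / Λ < 1)
    (hk1 : k ≤ 1) :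
    2 * α ^ 2 * Λ⁻¹ * (1 - k) ^ 2 - 4 * (2 * α - k / 2) * (1 - 2 * α - k / 2) < 0 ↔
      k < 1 - (1 - 4 * α) / Real.sqrt (1 - 2 * Λ⁻¹ * α ^ 2) := by
  have hq : 0 < 1 - 2 * Λ⁻¹ * α ^ 2 := by
    rw [div_eq_mul_inv] at hαΛ
    linarith
  rw [discriminant_eq, lt_sub_comm]
  exact sq_sub_mul_sq_neg_iff_div_sqrt_lt (by linarith) hq (by linarith)

/-- The strict discriminant inequality
`2α²Λ⁻¹(1 − k)² − 4(2α − k/2)(1 − 2α − k/2) < 0`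
holds iff `k < 1 − (1 − 4α)/√(1 − 2Λ⁻¹α²)`. -/
theorem discriminant_lt_iff (Λ α k : ℝ) (hΛ : 0 < Λ)
    (hα0 : 0 < α) (hα1 : α ≤ 1 / 4) (hαΛ : 2 * α ^ 2 / Λ < 1)
    (hk0 : 0 ≤ k) (hk1 : k ≤ 1) :
    2 * α ^ 2 * Λ⁻¹ * (1 - k) ^ 2 - 4 * (2 * α - k / 2) * (1 - 2 * α - k / 2) < 0 ↔
      k < 1 - (1 - 4 * α) / Real.sqrt (1 - 2 * Λ⁻¹ * α ^ 2) :=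
  discriminant_lt_iff_general Λ α k hα1 hαΛ hk1
end

section
/- Let Λ > 0 and let α satisfy 0 < α < 4/(8 + Λ⁻¹). Then 2α² < Λ, and there exists a real number k with 0 < k ≤ 1, k ≤ 4α, k ≤ 2(1 − 2α), and 2α²Λ⁻¹(1 − k)² ≤ 4(2α − k/2)(1 − 2α − k/2). -/
/-!
With `c = 2α²Λ⁻¹`, the hypothesis on `α` is equivalent to `c < 8α(1 − 2α)`, and
`8α(1 − 2α) ≤ 1` by AM-GM, so `c < 1`, i.e. `2α² < Λ`. At `k = 0` every required
inequality on `k` holds strictly (the discriminant one because `c < 8α(1 − 2α)`),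
so by continuity they all hold for every small enough `k > 0`.
-/

open Filter Topology

lemma mul_inv_lt_of_lt_div_add_inv {Λ α : ℝ} (hΛ : 0 < Λ) (hα : α < 4 / (8 + Λ⁻¹)) :
    α * Λ⁻¹ < 4 - 8 * α := by
  rw [lt_div_iff₀ (by positivity)] at hα
  linarith

lemma eight_mul_mul_one_sub_two_mul_le_one (α : ℝ) : 8 * α * (1 - 2 * α) ≤ 1 := by
  nlinarith [sq_nonneg (4 * α - 1)]

/-- If `0 < α < 4/(8 + Λ⁻¹)` then `2α² < Λ`, and there exists a decay exponent
`k` with `0 < k ≤ 1`, `k ≤ 4α`, `k ≤ 2(1 − 2α)`, and the discriminant condition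
`2α²Λ⁻¹(1 − k)² ≤ 4(2α − k/2)(1 − 2α − k/2)`. -/
theorem exists_decay_exponent (Λ α : ℝ) (hΛ : 0 < Λ)
    (hα0 : 0 < α) (hα1 : α < 4 / (8 + Λ⁻¹)) :
    2 * α ^ 2 < Λ ∧
      ∃ k : ℝ, 0 < k ∧ k ≤ 1 ∧ k ≤ 4 * α ∧ k ≤ 2 * (1 - 2 * α) ∧
        2 * α ^ 2 * Λ⁻¹ * (1 - k) ^ 2 ≤ 4 * (2 * α - k / 2) * (1 - 2 * α - k / 2) := by
  have hαΛ := mul_inv_lt_of_lt_div_add_inv hΛ hα1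
  have hα_half : α < 1 / 2 := by nlinarith [mul_pos hα0 (inv_pos.mpr hΛ)]
  have hdisc : 2 * α ^ 2 * Λ⁻¹ < 8 * α * (1 - 2 * α) := by nlinarith
  refine ⟨?_, ?_⟩
  · have hc : 2 * α ^ 2 * Λ⁻¹ < 1 := hdisc.trans_le (eight_mul_mul_one_sub_two_mul_le_one α)
    rwa [← div_eq_mul_inv, div_lt_one hΛ] at hc
  · have h1 : ∀ᶠ k in 𝓝 (0 : ℝ), k < 1 := eventually_lt_nhds one_pos
    have h2 : ∀ᶠ k in 𝓝 (0 : ℝ), k < 4 * α := eventually_lt_nhds (by linarith)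
    have h3 : ∀ᶠ k in 𝓝 (0 : ℝ), k < 2 * (1 - 2 * α) := eventually_lt_nhds (by linarith)
    have h4 : ∀ᶠ k in 𝓝 (0 : ℝ), 2 * α ^ 2 * Λ⁻¹ * (1 - k) ^ 2 <
        4 * (2 * α - k / 2) * (1 - 2 * α - k / 2) :=
      ContinuousAt.eventually_lt (by fun_prop) (by fun_prop) (by linarith)
    obtain ⟨k, hk0, hk1, hk2, hk3, hk4⟩ := (h1.and (h2.and (h3.and h4))).exists_gt
    exact ⟨k, hk0, hk1.le, hk2.le, hk3.le, hk4.le⟩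
end

section
/- Let t₀ > 0, k > 0, M₁ > 0, and let y : ℝ → ℝ be differentiable on [t₀, ∞) with y(t) ≥ 0 for all t ≥ t₀, y′(t) ≤ −(k/t)(y(t) − M₁·y(t)^{3/2}) for all t ≥ t₀, and M₁·√(y(t₀)) < 1/2. Then for all t ≥ t₀, y(t) ≤ y(t₀) and M₁·√(y(t)) < 1/2; in particular y is nonincreasing on [t₀, ∞). -/
/-!
For `0 ≤ y` and `M₁ √y ≤ 1` the right-hand side `-(k/t) y (1 - M₁ √y)` is nonpositive, so `y`
cannot increase as long as `y` stays below the threshold `(2M₁)⁻²` where `M₁ √y = 1/2`. Since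
`y(t₀)` is strictly below it, `y` can never reach the threshold: at the first time it did, `y`
would have been nonincreasing up to then, hence still at most `y(t₀)`.
-/

open Set

theorem antitoneOn_of_hasDerivAt_nonpos {D : Set ℝ} (hD : Convex ℝ D) {f f' : ℝ → ℝ}
    (hf : ∀ x ∈ D, HasDerivAt f (f' x) x) (hf'₀ : ∀ x ∈ interior D, f' x ≤ 0) :
    AntitoneOn f D :=
  antitoneOn_of_hasDerivWithinAt_nonpos hD
    (fun x hx => (hf x hx).continuousAt.continuousWithinAt)
    (fun x hx => (hf x (interior_subset hx)).hasDerivWithinAt) hf'₀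

theorem image_lt_of_deriv_nonpos_below {f f' : ℝ → ℝ} {a c : ℝ}
    (hf : ∀ t ∈ Ici a, HasDerivAt f (f' t) t) (ha : f a < c)
    (hf' : ∀ t ∈ Ici a, f t < c → f' t ≤ 0) : ∀ t ∈ Ici a, f t < c := by
  intro b hb
  by_contra! hcb
  have hcont : ContinuousOn f (Icc a b) := fun t ht =>
    (hf t ht.1).continuousAt.continuousWithinAt
  set K := Icc a b ∩ f ⁻¹' Ici c
  have hKbdd : BddBelow K := ⟨a, fun t ht => ht.1.1⟩
  have hs : sInf K ∈ K :=
    (hcont.preimage_isClosed_of_isClosed isClosed_Icc isClosed_Ici).csInf_mem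
      ⟨b, ⟨hb, le_rfl⟩, hcb⟩ hKbdd
  set s := sInf K
  have hbefore : ∀ t ∈ Ico a s, f t < c := fun t ht => by
    by_contra! h
    exact (csInf_le hKbdd ⟨⟨ht.1, ht.2.le.trans hs.1.2⟩, h⟩).not_gt ht.2
  have hanti : AntitoneOn f (Icc a s) :=
    antitoneOn_of_hasDerivAt_nonpos (convex_Icc a s) (fun t ht => hf t ht.1)
      (fun t ht => by
        rw [interior_Icc] at ht
        exact hf' t ht.1.le (hbefore t ⟨ht.1.le, ht.2⟩))
  have : f s ≤ f a := hanti ⟨le_rfl, hs.1.1⟩ ⟨hs.1.1, le_rfl⟩ hs.1.1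
  exact (hs.2.trans this).not_gt ha

theorem mul_sqrt_lt_half_iff {M x : ℝ} (hM : 0 < M) :
    M * √x < 1 / 2 ↔ x < ((2 * M)⁻¹) ^ 2 := by
  rw [← Real.sqrt_lt' (by positivity), ← lt_div_iff₀' hM, div_div, one_div]

theorem sub_mul_rpow_three_halves_nonneg {M x : ℝ} (hx : 0 ≤ x) (h : M * √x ≤ 1) :
    0 ≤ x - M * x ^ ((3 : ℝ) / 2) := by
  have h32 : x ^ ((3 : ℝ) / 2) = x * √x := by
    rw [Real.sqrt_eq_rpow, show (3 : ℝ) / 2 = 1 + 1 / 2 by norm_num,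
      Real.rpow_add' hx (by norm_num), Real.rpow_one]
  rw [h32, show x - M * (x * √x) = x * (1 - M * √x) by ring]
  exact mul_nonneg hx (by linarith)

/-- If the total corrected energy `y` satisfies the differential inequality
`y′ ≤ −(k/t)(y − M₁ y^{3/2})` on `[t₀, ∞)` and initially `M₁ √(y(t₀)) < 1/2`, then
`y(t) ≤ y(t₀)` and `M₁ √(y(t)) < 1/2` for all `t ≥ t₀`; in particular `y` is
nonincreasing on `[t₀, ∞)`. -/
theorem corrected_energy_nonincreasing (t₀ k M₁ : ℝ) (y y' : ℝ → ℝ)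
    (ht₀ : 0 < t₀) (hk : 0 < k) (hM₁ : 0 < M₁)
    (hderiv : ∀ t ∈ Set.Ici t₀, HasDerivAt y (y' t) t)
    (hy0 : ∀ t ∈ Set.Ici t₀, 0 ≤ y t)
    (hineq : ∀ t ∈ Set.Ici t₀, y' t ≤ -(k / t) * (y t - M₁ * y t ^ ((3 : ℝ) / 2)))
    (hinit : M₁ * Real.sqrt (y t₀) < 1 / 2) :
    (∀ t ∈ Set.Ici t₀, y t ≤ y t₀ ∧ M₁ * Real.sqrt (y t) < 1 / 2) ∧
      AntitoneOn y (Set.Ici t₀) := by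
  have hnonpos : ∀ t ∈ Ici t₀, y t < ((2 * M₁)⁻¹) ^ 2 → y' t ≤ 0 := fun t ht hyt => by
    have hsmall := (mul_sqrt_lt_half_iff hM₁).2 hyt
    have hrhs := sub_mul_rpow_three_halves_nonneg (M := M₁) (hy0 t ht) (by linarith)
    have hkt : 0 < k / t := div_pos hk (ht₀.trans_le ht)
    exact (hineq t ht).trans (mul_nonpos_of_nonpos_of_nonneg (neg_nonpos.2 hkt.le) hrhs)
  have hbelow := image_lt_of_deriv_nonpos_below hderiv ((mul_sqrt_lt_half_iff hM₁).1 hinit)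
    hnonpos
  have hanti : AntitoneOn y (Ici t₀) :=
    antitoneOn_of_hasDerivAt_nonpos (convex_Ici t₀) hderiv fun t ht => by
      rw [interior_Ici] at ht
      have ht' : t ∈ Ici t₀ := Ioi_subset_Ici_self ht
      exact hnonpos t ht' (hbelow t ht')
  exact ⟨fun t ht => ⟨hanti self_mem_Ici ht ht, (mul_sqrt_lt_half_iff hM₁).2 (hbelow t ht)⟩,
    hanti⟩
end

section
/- Let t₀ > 0, k > 0, M₁ > 0, and let y : ℝ → ℝ be differentiable on [t₀, ∞) with y(t) ≥ 0 for all t ≥ t₀, y′(t) ≤ −(k/t)(y(t) − M₁·y(t)^{3/2}) for all t ≥ t₀, and M₁·√(y(t₀)) < 1/2. Then for all t ≥ t₀ one has t^k·y(t) ≤ t₀^k·y(t₀)/(1 − M₁·√(y(t₀)))². -/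
open Set Real Filter Topology

/-! With `z(t) = t^k y(t)` the hypothesis becomes the Bernoulli-type inequality
`z' ≤ k M₁ t^(-k/2-1) z^(3/2)`, solved by `u⁻²` with `u(t) = w - M₁ (t₀^(-k/2) - t^(-k/2))`.
Replacing `M₁` by `M > M₁` makes `u⁻²` a strict upper barrier: where it touches `z`, `z' < (u⁻²)'`.
Since `u ≥ w - M t₀^(-k/2)`, this bounds `t^k y(t)` by `t₀^k Y / (1 - M √Y)²` whenever
`Y = t₀^(-k) w⁻² ≥ y(t₀)` is positive; letting `M ↓ M₁` and `Y ↓ y(t₀)` gives the estimate. -/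

theorem weighted_deriv_le_of_energy_ineq {k M₁ x y y' : ℝ} (hx : 0 < x) (hy : 0 ≤ y)
    (hy' : y' ≤ -(k / x) * (y - M₁ * y ^ ((3 : ℝ) / 2))) :
    k * x ^ (k - 1) * y + x ^ k * y' ≤
      2 * (k / 2) * M₁ * x ^ (-(k / 2) - 1) * (x ^ k * y) ^ ((3 : ℝ) / 2) := by
  have hweight : x ^ k * (k / x) = k * x ^ (k - 1) := by
    rw [rpow_sub_one hx.ne']
    ring
  have hpow :
      x ^ (-(k / 2) - 1) * (x ^ k * y) ^ ((3 : ℝ) / 2) = x ^ (k - 1) * y ^ ((3 : ℝ) / 2) := by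
    rw [mul_rpow (rpow_nonneg hx.le k) hy, ← rpow_mul hx.le, ← mul_assoc, ← rpow_add hx]
    ring_nf
  have hscaled := mul_le_mul_of_nonneg_left hy' (rpow_nonneg hx.le k)
  linear_combination hscaled - (y - M₁ * y ^ ((3 : ℝ) / 2)) * hweight - 2 * (k / 2) * M₁ * hpow

theorem inv_sq_rpow_three_halves {u : ℝ} (hu : 0 < u) :
    (u ^ 2)⁻¹ ^ ((3 : ℝ) / 2) = (u ^ 3)⁻¹ := by
  rw [inv_rpow (by positivity), ← rpow_natCast, ← rpow_mul hu.le]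
  norm_num

theorem le_inv_sq_barrier_of_deriv_le {a b c m₁ m w : ℝ} {z z' : ℝ → ℝ}
    (ha : 0 < a) (hc : 0 < c) (hm : 0 < m) (hm₁ : m₁ < m) (hw : m * a ^ (-c) < w)
    (hz : ∀ x ∈ Icc a b, HasDerivAt z (z' x) x) (hza : z a ≤ (w ^ 2)⁻¹)
    (hz_le : ∀ x ∈ Ico a b, z' x ≤ 2 * c * m₁ * x ^ (-c - 1) * z x ^ ((3 : ℝ) / 2)) :
    ∀ x ∈ Icc a b, z x ≤ ((w - m * (a ^ (-c) - x ^ (-c))) ^ 2)⁻¹ := by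
  set u : ℝ → ℝ := fun x => w - m * (a ^ (-c) - x ^ (-c))
  have hu_pos : ∀ x ∈ Icc a b, 0 < u x := fun x hx => by
    have : 0 < m * x ^ (-c) := mul_pos hm (rpow_pos_of_pos (ha.trans_le hx.1) _)
    simp only [u]
    linarith
  have hB : ∀ x ∈ Icc a b,
      HasDerivAt (fun x => (u x ^ 2)⁻¹) (2 * c * m * x ^ (-c - 1) * (u x ^ 3)⁻¹) x := by
    intro x hx
    have hu : HasDerivAt u (m * (-c * x ^ (-c - 1))) x :=
      ((hasDerivAt_rpow_const (Or.inl (ha.trans_le hx.1).ne')).const_sub _ |>.const_mul m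
        |>.const_sub w).congr_deriv (by ring)
    refine ((hu.fun_pow 2).fun_inv (pow_ne_zero 2 (hu_pos x hx).ne')).congr_deriv ?_
    have := (hu_pos x hx).ne'
    field_simp
    ring
  refine fun x hx => image_le_of_deriv_right_lt_deriv_boundary'
    (fun x hx => (hz x hx).continuousAt.continuousWithinAt)
    (fun x hx => (hz x (Ico_subset_Icc_self hx)).hasDerivWithinAt)
    (by simpa [u] using hza)
    (fun x hx => (hB x hx).continuousAt.continuousWithinAt)
    (fun x hx => (hB x (Ico_subset_Icc_self hx)).hasDerivWithinAt) ?_ hx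
  intro x hx hzx
  have hux := hu_pos x (Ico_subset_Icc_self hx)
  calc z' x ≤ 2 * c * m₁ * x ^ (-c - 1) * (u x ^ 3)⁻¹ := by
        simpa only [hzx, inv_sq_rpow_three_halves hux] using hz_le x hx
    _ < 2 * c * m * x ^ (-c - 1) * (u x ^ 3)⁻¹ := by
        have := rpow_pos_of_pos (ha.trans_le hx.1) (-c - 1)
        gcongr

theorem corrected_energy_decay_of_lt {t₀ k M₁ M Y : ℝ} {y y' : ℝ → ℝ}
    (ht₀ : 0 < t₀) (hk : 0 < k) (hM : 0 < M) (hM₁ : M₁ < M)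
    (hderiv : ∀ t ∈ Ici t₀, HasDerivAt y (y' t) t) (hy0 : ∀ t ∈ Ici t₀, 0 ≤ y t)
    (hineq : ∀ t ∈ Ici t₀, y' t ≤ -(k / t) * (y t - M₁ * y t ^ ((3 : ℝ) / 2)))
    (hY : y t₀ ≤ Y) (hY0 : 0 < Y) (hMY : M * √Y < 1) :
    ∀ t ∈ Ici t₀, t ^ k * y t ≤ t₀ ^ k * Y / (1 - M * √Y) ^ 2 := by
  intro t ht
  set p := t₀ ^ (k / 2)
  set s := √Y
  have hp : 0 < p := rpow_pos_of_pos ht₀ _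
  have hs : 0 < s := sqrt_pos.mpr hY0
  have hp_sq : t₀ ^ k = p ^ 2 := by
    rw [← rpow_natCast, ← rpow_mul ht₀.le]
    norm_num
  have hp_inv : t₀ ^ (-(k / 2)) = p⁻¹ := rpow_neg ht₀.le _
  have hz : ∀ x ∈ Icc t₀ t,
      HasDerivAt (fun x => x ^ k * y x) (k * x ^ (k - 1) * y x + x ^ k * y' x) x :=
    fun x hx => (hasDerivAt_rpow_const (Or.inl (ht₀.trans_le hx.1).ne')).mul (hderiv x hx.1)
  have hz_le : ∀ x ∈ Ico t₀ t, k * x ^ (k - 1) * y x + x ^ k * y' x ≤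
      2 * (k / 2) * M₁ * x ^ (-(k / 2) - 1) * (x ^ k * y x) ^ ((3 : ℝ) / 2) :=
    fun x hx => weighted_deriv_le_of_energy_ineq (ht₀.trans_le hx.1) (hy0 x hx.1) (hineq x hx.1)
  have hgap_eq : (p * s)⁻¹ - M * p⁻¹ = (1 - M * s) / (p * s) := by
    field_simp
  have hgap : 0 < (p * s)⁻¹ - M * p⁻¹ := by
    rw [hgap_eq]
    exact div_pos (by linarith) (by positivity)
  have hz₀ : t₀ ^ k * y t₀ ≤ ((p * s)⁻¹ ^ 2)⁻¹ := by
    rw [inv_pow, inv_inv, mul_pow, sq_sqrt hY0.le, hp_sq]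
    gcongr
  calc t ^ k * y t ≤ (((p * s)⁻¹ - M * (t₀ ^ (-(k / 2)) - t ^ (-(k / 2)))) ^ 2)⁻¹ :=
        le_inv_sq_barrier_of_deriv_le ht₀ (half_pos hk) hM hM₁ (by rw [hp_inv]; linarith) hz hz₀
          hz_le t ⟨ht, le_rfl⟩
    _ ≤ (((p * s)⁻¹ - M * p⁻¹) ^ 2)⁻¹ := by
        have ht_pos := rpow_pos_of_pos (ht₀.trans_le ht) (-(k / 2))
        have := mul_pos hM ht_pos
        rw [hp_inv]
        gcongr
        linarith
    _ = t₀ ^ k * Y / (1 - M * s) ^ 2 := by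
        rw [hgap_eq, hp_sq, ← sq_sqrt hY0.le]
        field_simp
        rfl

/-- Decay estimate for the total corrected energy: if `y′ ≤ −(k/t)(y − M₁ y^{3/2})`
on `[t₀, ∞)` and `M₁ √(y(t₀)) < 1/2`, then
`t^k y(t) ≤ t₀^k y(t₀)/(1 − M₁ √(y(t₀)))²` for all `t ≥ t₀`. -/
theorem corrected_energy_decay (t₀ k M₁ : ℝ) (y y' : ℝ → ℝ)
    (ht₀ : 0 < t₀) (hk : 0 < k) (hM₁ : 0 < M₁)
    (hderiv : ∀ t ∈ Set.Ici t₀, HasDerivAt y (y' t) t)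
    (hy0 : ∀ t ∈ Set.Ici t₀, 0 ≤ y t)
    (hineq : ∀ t ∈ Set.Ici t₀, y' t ≤ -(k / t) * (y t - M₁ * y t ^ ((3 : ℝ) / 2)))
    (hinit : M₁ * Real.sqrt (y t₀) < 1 / 2) :
    ∀ t ∈ Set.Ici t₀,
      t ^ k * y t ≤ t₀ ^ k * y t₀ / (1 - M₁ * Real.sqrt (y t₀)) ^ 2 := by
  intro t ht
  set g : ℝ → ℝ := fun ε => (M₁ + ε) * √(y t₀ + ε)
  have hg : Continuous g := by fun_prop
  have hg0 : g 0 = M₁ * √(y t₀) := by simp [g]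
  have hlim : Tendsto (fun ε => t₀ ^ k * (y t₀ + ε) / (1 - g ε) ^ 2) (𝓝[>] 0)
      (𝓝 (t₀ ^ k * y t₀ / (1 - M₁ * √(y t₀)) ^ 2)) := by
    have hcont : ContinuousAt (fun ε => t₀ ^ k * (y t₀ + ε) / (1 - g ε) ^ 2) 0 :=
      (by fun_prop : Continuous _).continuousAt.div (by fun_prop)
        (pow_ne_zero 2 (by rw [hg0]; linarith))
    simpa [hg0] using hcont.tendsto.mono_left nhdsWithin_le_nhds
  have hsmall : ∀ᶠ ε in 𝓝[>] 0, g ε < 1 :=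
    (hg.continuousAt.eventually_lt continuousAt_const (by rw [hg0]; linarith)).filter_mono
      nhdsWithin_le_nhds
  refine ge_of_tendsto hlim ?_
  filter_upwards [hsmall, self_mem_nhdsWithin] with ε hε (hε_pos : 0 < ε)
  exact corrected_energy_decay_of_lt ht₀ hk (by positivity) (lt_add_of_pos_right M₁ hε_pos)
    hderiv hy0 hineq (le_add_of_nonneg_right hε_pos.le) (by linarith [hy0 t₀ self_mem_Ici]) hε
    t ht
end

section
/- Let t₀ > 0, k > 0, M₁ > 0, and let z : ℝ → ℝ be differentiable on [t₀, ∞) with 0 < z(t) and M₁·z(t) < 1 for all t ≥ t₀, and z′(t) ≤ −(k/(2t))·z(t)·(1 − M₁·z(t)) for all t ≥ t₀. Then for all t ≥ t₀: log( z(t)·(1 − M₁·z(t₀)) / ((1 − M₁·z(t))·z(t₀)) ) + (k/2)·log(t/t₀) ≤ 0. -/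
/-!
Along the flow, `log (z / (1 - M₁ z))` has derivative `z' / (z (1 - M₁ z)) ≤ -k / (2t)`, so the
potential `log (z / (1 - M₁ z)) + (k/2) log t` is nonincreasing on `[t₀, ∞)`. Comparing its values
at `t` and `t₀` is the estimate.
-/

open Real Set

theorem antitoneOn_Ici_of_hasDerivAt_nonpos {a : ℝ} {g g' : ℝ → ℝ}
    (hg : ∀ t ∈ Ici a, HasDerivAt g (g' t) t) (hg' : ∀ t ∈ Ici a, g' t ≤ 0) :
    AntitoneOn g (Ici a) :=
  antitoneOn_of_hasDerivWithinAt_nonpos (convex_Ici a)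
    (fun t ht => (hg t ht).continuousAt.continuousWithinAt)
    (fun t ht => (hg t (interior_subset ht)).hasDerivWithinAt)
    (fun t ht => hg' t (interior_subset ht))

theorem hasDerivAt_log_div_one_sub_mul {z : ℝ → ℝ} {z' M t : ℝ} (hz : HasDerivAt z z' t)
    (h0 : z t ≠ 0) (h1 : 1 - M * z t ≠ 0) :
    HasDerivAt (fun s => log (z s / (1 - M * z s))) (z' / (z t * (1 - M * z t))) t := by
  have hden : HasDerivAt (fun s => 1 - M * z s) (-(M * z')) t := (hz.const_mul M).const_sub 1
  refine ((hz.div hden h1).log (div_ne_zero h0 h1)).congr_deriv ?_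
  simp only [Pi.div_apply]
  field_simp
  ring

noncomputable def bernoulliPotential (k M : ℝ) (z : ℝ → ℝ) (t : ℝ) : ℝ :=
  log (z t / (1 - M * z t)) + k / 2 * log t

section

variable {k M : ℝ} {z : ℝ → ℝ}

theorem hasDerivAt_bernoulliPotential {z' t : ℝ} (hz : HasDerivAt z z' t) (ht : t ≠ 0)
    (h0 : z t ≠ 0) (h1 : 1 - M * z t ≠ 0) :
    HasDerivAt (bernoulliPotential k M z) (z' / (z t * (1 - M * z t)) + k / (2 * t)) t := by
  refine (hasDerivAt_log_div_one_sub_mul hz h0 h1).add (((hasDerivAt_log ht).const_mul (k / 2)).congr_deriv ?_)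
  field_simp

theorem antitoneOn_bernoulliPotential {t₀ : ℝ} {z' : ℝ → ℝ} (ht₀ : 0 < t₀)
    (hderiv : ∀ t ∈ Ici t₀, HasDerivAt z (z' t) t) (hz0 : ∀ t ∈ Ici t₀, 0 < z t)
    (hz1 : ∀ t ∈ Ici t₀, M * z t < 1)
    (hineq : ∀ t ∈ Ici t₀, z' t ≤ -(k / (2 * t)) * z t * (1 - M * z t)) :
    AntitoneOn (bernoulliPotential k M z) (Ici t₀) := by
  refine antitoneOn_Ici_of_hasDerivAt_nonpos (fun t ht => hasDerivAt_bernoulliPotential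
    (hderiv t ht) (ht₀.trans_le ht).ne' (hz0 t ht).ne' (sub_pos.2 (hz1 t ht)).ne') ?_
  intro t ht
  have hpos : 0 < z t * (1 - M * z t) := mul_pos (hz0 t ht) (sub_pos.2 (hz1 t ht))
  have hbound : z' t ≤ -(k / (2 * t)) * (z t * (1 - M * z t)) := by
    simpa only [mul_assoc] using hineq t ht
  have : z' t / (z t * (1 - M * z t)) ≤ -(k / (2 * t)) := (div_le_iff₀ hpos).2 hbound
  linarith

end

theorem bernoulli_log_estimate_general (t₀ k M₁ : ℝ) (z z' : ℝ → ℝ)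
    (ht₀ : 0 < t₀)
    (hderiv : ∀ t ∈ Set.Ici t₀, HasDerivAt z (z' t) t)
    (hz0 : ∀ t ∈ Set.Ici t₀, 0 < z t)
    (hz1 : ∀ t ∈ Set.Ici t₀, M₁ * z t < 1)
    (hineq : ∀ t ∈ Set.Ici t₀, z' t ≤ -(k / (2 * t)) * z t * (1 - M₁ * z t)) :
    ∀ t ∈ Set.Ici t₀,
      Real.log (z t * (1 - M₁ * z t₀) / ((1 - M₁ * z t) * z t₀))
        + k / 2 * Real.log (t / t₀) ≤ 0 := by
  intro t ht
  have hmono := antitoneOn_bernoulliPotential ht₀ hderiv hz0 hz1 hineq self_mem_Ici ht ht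
  have h0 := (hz0 t ht).ne'
  have h0₀ := (hz0 t₀ self_mem_Ici).ne'
  have h1 := (sub_pos.2 (hz1 t ht)).ne'
  have h1₀ := (sub_pos.2 (hz1 t₀ self_mem_Ici)).ne'
  have hratio : z t * (1 - M₁ * z t₀) / ((1 - M₁ * z t) * z t₀)
      = (z t / (1 - M₁ * z t)) / (z t₀ / (1 - M₁ * z t₀)) := by
    field_simp
  rw [hratio, log_div (div_ne_zero h0 h1) (div_ne_zero h0₀ h1₀),
    log_div (ht₀.trans_le ht).ne' ht₀.ne']
  unfold bernoulliPotential at hmono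
  linarith

/-- Integrated logarithmic estimate for `z = √y`: if `0 < z`, `M₁ z < 1` and
`z′ ≤ −(k/(2t)) z (1 − M₁ z)` on `[t₀, ∞)`, then for all `t ≥ t₀`,
`log( z(t)(1 − M₁ z(t₀)) / ((1 − M₁ z(t)) z(t₀)) ) + (k/2) log(t/t₀) ≤ 0`. -/
theorem bernoulli_log_estimate (t₀ k M₁ : ℝ) (z z' : ℝ → ℝ)
    (ht₀ : 0 < t₀) (hk : 0 < k) (hM₁ : 0 < M₁)
    (hderiv : ∀ t ∈ Set.Ici t₀, HasDerivAt z (z' t) t)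
    (hz0 : ∀ t ∈ Set.Ici t₀, 0 < z t)
    (hz1 : ∀ t ∈ Set.Ici t₀, M₁ * z t < 1)
    (hineq : ∀ t ∈ Set.Ici t₀, z' t ≤ -(k / (2 * t)) * z t * (1 - M₁ * z t)) :
    ∀ t ∈ Set.Ici t₀,
      Real.log (z t * (1 - M₁ * z t₀) / ((1 - M₁ * z t) * z t₀))
        + k / 2 * Real.log (t / t₀) ≤ 0 :=
  bernoulli_log_estimate_general t₀ k M₁ z z' ht₀ hderiv hz0 hz1 hineq
end
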